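/- Let G and H be finitely generated groups such that in each of G and H, y⁻¹xy = x⁻¹ implies x = x⁻¹, and each of G and H is non-abelian or of exponent 2. Let 𝒮_G and 𝒮_H be quasi-optimal families of finite symmetric generating systems of G and H respectively, and suppose (η, η') is a pair of maps η: G → H, η': H → G such that (η, η') is an 𝒮_H-semi-shared quasi-isometry and (η', η) is an 𝒮_G-semi-shared quasi-isometry. Then G and H are isomorphic as groups. -/

import Mathlib

/-! Common definitions: word metrics, quasi-isometries, rough isometries. -/

/-- `g` is a product of `n` elements of `S ∪ S⁻¹`. -/
def IsWordProd {G : Type*} [Group G] (S : Set G) (g : G) (n : ℕ) : Prop :=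
  ∃ l : List G, l.length = n ∧ (∀ s ∈ l, s ∈ S ∪ S⁻¹) ∧ l.prod = g

/-- The word metric associated to a generating system `S`: the least `n` such that
`x⁻¹ * y` is a product of `n` elements of `S ∪ S⁻¹`. -/
noncomputable def wdist {G : Type*} [Group G] (S : Set G) (x y : G) : ℕ :=
  sInf {n | IsWordProd S (x⁻¹ * y) n}

/-- The word norm `‖g‖_S = d_S(e, g)`. -/
noncomputable def wnorm {G : Type*} [Group G] (S : Set G) (g : G) : ℕ :=
  wdist S 1 g

/-- `(η, η')` is a `(lam, eps)`-quasi-isometry between `(X, dX)` and `(Y, dY)`. -/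
def IsQIPair {X Y : Type*} (dX : X → X → ℝ) (dY : Y → Y → ℝ)
    (η : X → Y) (η' : Y → X) (lam eps : ℝ) : Prop :=
  (∀ x x' : X, lam⁻¹ * dX x x' - eps ≤ dY (η x) (η x') ∧
      dY (η x) (η x') ≤ lam * dX x x' + eps) ∧
  (∀ y y' : Y, lam⁻¹ * dY y y' - eps ≤ dX (η' y) (η' y') ∧
      dX (η' y) (η' y') ≤ lam * dY y y' + eps) ∧
  (∀ y : Y, dY (η (η' y)) y ≤ eps) ∧
  (∀ x : X, dX (η' (η x)) x ≤ eps)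

/-- `(η, η')` is an `eps`-isometry between `(X, dX)` and `(Y, dY)`. -/
def IsEpsIsomPair {X Y : Type*} (dX : X → X → ℝ) (dY : Y → Y → ℝ)
    (η : X → Y) (η' : Y → X) (eps : ℝ) : Prop :=
  (∀ x x' : X, |dX x x' - dY (η x) (η x')| ≤ eps) ∧
  (∀ y y' : Y, |dY y y' - dX (η' y) (η' y')| ≤ eps) ∧
  (∀ y : Y, dY (η (η' y)) y ≤ eps) ∧
  (∀ x : X, dX (η' (η x)) x ≤ eps)

/-- The real-valued word metric. -/
noncomputable def wdistR {G : Type*} [Group G] (S : Set G) (x y : G) : ℝ :=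
  (wdist S x y : ℝ)

/-- Property (★): for all `g ≠ h`, `g ≠ h⁻¹` and every positive `R` there is `S ∈ 𝒮`
containing one of `g`, `h` while the other has word norm at least `R`. -/
def PropertyStar {G : Type*} [Group G] (𝒮 : Set (Set G)) : Prop :=
  ∀ g h : G, g ≠ h → g ≠ h⁻¹ → ∀ R : ℕ, 0 < R →
    ∃ S ∈ 𝒮, (g ∈ S ∧ R ≤ wnorm S h) ∨ (h ∈ S ∧ R ≤ wnorm S g)

/-- `φ` is an `𝒮`-uniform quasi-isometry of `G`: for some fixed `λ, ε ≥ 0` and some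
`φ'`, the pair `(φ, φ')` is a `(λ, ε)`-quasi-isometry of `(G, d_S)` for every `S ∈ 𝒮`. -/
def UniformQI {G : Type*} [Group G] (𝒮 : Set (Set G)) (φ : G → G) : Prop :=
  ∃ lam eps : ℝ, 0 ≤ lam ∧ 0 ≤ eps ∧ ∃ φ' : G → G,
    ∀ S ∈ 𝒮, IsQIPair (wdistR S) (wdistR S) φ φ' lam eps

/-- `(η, η')` is an `𝒮_H`-semi-shared quasi-isometry: for some fixed `λ, ε ≥ 0`, every
generating system `S_H ∈ 𝒮_H` is matched by some finite generating system `S_G` of `G`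
making `(η, η')` a `(λ, ε)`-quasi-isometry. -/
def SemiSharedQI {G H : Type*} [Group G] [Group H] (𝒮H : Set (Set H))
    (η : G → H) (η' : H → G) : Prop :=
  ∃ lam eps : ℝ, 0 ≤ lam ∧ 0 ≤ eps ∧
    ∀ SH ∈ 𝒮H, ∃ SG : Set G, SG.Finite ∧ Subgroup.closure SG = ⊤ ∧
      IsQIPair (wdistR SG) (wdistR SH) η η' lam eps

/-- A family `𝒮` of generating systems of `G` is quasi-optimal if every `𝒮`-uniform
quasi-isometry of `G` is left translation by a unique element of `G`. -/
def QuasiOptimal {G : Type*} [Group G] (𝒮 : Set (Set G)) : Prop :=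
  ∀ φ : G → G, UniformQI 𝒮 φ → ∃! c : G, ∀ x : G, φ x = c * x

/-!
Conjugating a left translation of `H` by the quasi-isometry, `x ↦ η' (h * η x)`, gives a
self-map of `G` that is a quasi-isometry uniformly over `𝒮_G`, so by quasi-optimality it is the
left translation by `θ h := η' (h * η 1)`; symmetrically `η (g * η' y) = θ' g * y` with
`θ' g := η (g * η' 1)`. Quasi-optimality also forces two points of `G` whose distance is bounded
uniformly over `𝒮_G` to coincide: otherwise moving one of them to the other would be a uniform
quasi-isometry that is not a translation. This turns the coarse identities
`θ (h₁ h₂) ≈ θ h₁ θ h₂`, `θ ∘ θ' ≈ id` and `θ' ∘ θ ≈ id` into exact ones.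
-/

section WordMetric

variable {G : Type*} [Group G] {S : Set G}

theorem isWordProd_one : IsWordProd S 1 0 := ⟨[], rfl, by simp, rfl⟩

theorem IsWordProd.mul {g h : G} {m n : ℕ} (hg : IsWordProd S g m) (hh : IsWordProd S h n) :
    IsWordProd S (g * h) (m + n) := by
  obtain ⟨l₁, rfl, hl₁, rfl⟩ := hg
  obtain ⟨l₂, rfl, hl₂, rfl⟩ := hh
  refine ⟨l₁ ++ l₂, List.length_append, fun s hs => ?_, List.prod_append⟩
  rcases List.mem_append.1 hs with hs | hs
  exacts [hl₁ s hs, hl₂ s hs]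

theorem IsWordProd.inv {g : G} {n : ℕ} (hg : IsWordProd S g n) : IsWordProd S g⁻¹ n := by
  obtain ⟨l, rfl, hl, rfl⟩ := hg
  refine ⟨(l.map (·⁻¹)).reverse, by simp, fun s hs => ?_, by simp [List.prod_inv_reverse]⟩
  simp only [List.mem_reverse, List.mem_map] at hs
  obtain ⟨t, ht, rfl⟩ := hs
  rcases hl t ht with h | h
  · exact Or.inr (by simpa using h)
  · exact Or.inl (by simpa using h)

theorem exists_isWordProd (hS : Subgroup.closure S = ⊤) (g : G) : ∃ n, IsWordProd S g n := by
  induction hS ▸ Subgroup.mem_top g using Subgroup.closure_induction with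
  | mem x hx => exact ⟨1, [x], rfl, by simp [hx], by simp⟩
  | one => exact ⟨0, isWordProd_one⟩
  | mul x y _ _ ihx ihy =>
    obtain ⟨m, hm⟩ := ihx
    obtain ⟨n, hn⟩ := ihy
    exact ⟨m + n, hm.mul hn⟩
  | inv x _ ih =>
    obtain ⟨m, hm⟩ := ih
    exact ⟨m, hm.inv⟩

theorem wdist_self (S : Set G) (x : G) : wdist S x x = 0 :=
  Nat.sInf_eq_zero.2 (Or.inl (by simpa using (isWordProd_one : IsWordProd S 1 0)))

theorem wdist_comm (S : Set G) (x y : G) : wdist S x y = wdist S y x := by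
  unfold wdist
  congr 1
  ext n
  constructor <;> intro h <;> simpa using h.inv

theorem wdist_mul_left (S : Set G) (g x y : G) : wdist S (g * x) (g * y) = wdist S x y := by
  simp [wdist, mul_assoc]

theorem wdist_triangle (hS : Subgroup.closure S = ⊤) (x y z : G) :
    wdist S x z ≤ wdist S x y + wdist S y z := by
  have hxy : IsWordProd S (x⁻¹ * y) (wdist S x y) := Nat.sInf_mem (exists_isWordProd hS _)
  have hyz : IsWordProd S (y⁻¹ * z) (wdist S y z) := Nat.sInf_mem (exists_isWordProd hS _)
  apply Nat.sInf_le
  simpa [mul_assoc] using hxy.mul hyz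

theorem wdistR_self (S : Set G) (x : G) : wdistR S x x = 0 := by
  simp [wdistR, wdist_self]

theorem wdistR_comm (S : Set G) (x y : G) : wdistR S x y = wdistR S y x := by
  rw [wdistR, wdist_comm, wdistR]

theorem wdistR_mul_left (S : Set G) (g x y : G) : wdistR S (g * x) (g * y) = wdistR S x y := by
  rw [wdistR, wdist_mul_left, wdistR]

theorem wdistR_triangle (hS : Subgroup.closure S = ⊤) (x y z : G) :
    wdistR S x z ≤ wdistR S x y + wdistR S y z := by
  unfold wdistR
  exact_mod_cast wdist_triangle hS x y z

end WordMetric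

section QuasiIsometry

variable {X Y Z : Type*} {dX : X → X → ℝ} {dY : Y → Y → ℝ} {dZ : Z → Z → ℝ}

theorem IsQIPair.symm {f : X → Y} {f' : Y → X} {lam eps : ℝ}
    (h : IsQIPair dX dY f f' lam eps) : IsQIPair dY dX f' f lam eps :=
  ⟨h.2.1, h.1, h.2.2.2, h.2.2.1⟩

theorem IsQIPair.comp (hX : ∀ x y z, dX x z ≤ dX x y + dX y z)
    (hZ : ∀ x y z, dZ x z ≤ dZ x y + dZ y z) {f : X → Y} {f' : Y → X} {g : Y → Z} {g' : Z → Y}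
    {l₁ e₁ l₂ e₂ : ℝ} (hl₁ : 0 ≤ l₁) (he₁ : 0 ≤ e₁) (hl₂ : 0 ≤ l₂) (he₂ : 0 ≤ e₂)
    (hf : IsQIPair dX dY f f' l₁ e₁) (hg : IsQIPair dY dZ g g' l₂ e₂) :
    IsQIPair dX dZ (g ∘ f) (f' ∘ g') (l₁ * l₂) ((l₁ + l₁⁻¹ + 2) * e₂ + (l₂ + l₂⁻¹ + 2) * e₁) := by
  obtain ⟨f_bd, f'_bd, ff', f'f⟩ := hf
  obtain ⟨g_bd, g'_bd, gg', g'g⟩ := hg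
  have hi₁ := inv_nonneg.2 hl₁
  have hi₂ := inv_nonneg.2 hl₂
  have := mul_nonneg hl₁ he₂
  have := mul_nonneg hi₁ he₂
  have := mul_nonneg hl₂ he₁
  have := mul_nonneg hi₂ he₁
  refine ⟨fun x x' => ?_, fun z z' => ?_, fun z => ?_, fun x => ?_⟩
  · have hlo := mul_le_mul_of_nonneg_left (f_bd x x').1 hi₂
    have hup := mul_le_mul_of_nonneg_left (f_bd x x').2 hl₂
    have := g_bd (f x) (f x')
    simp only [Function.comp_apply, mul_inv]
    constructor <;> linarith
  · have hlo := mul_le_mul_of_nonneg_left (g'_bd z z').1 hi₁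
    have hup := mul_le_mul_of_nonneg_left (g'_bd z z').2 hl₁
    have := f'_bd (g' z) (g' z')
    simp only [Function.comp_apply, mul_inv]
    constructor <;> linarith
  · have := mul_le_mul_of_nonneg_left (ff' (g' z)) hl₂
    have := (g_bd (f (f' (g' z))) (g' z)).2
    have := hZ (g (f (f' (g' z)))) (g (g' z)) z
    have := gg' z
    simp only [Function.comp_apply]
    linarith
  · have := mul_le_mul_of_nonneg_left (g'g (f x)) hl₁
    have := (f'_bd (g' (g (f x))) (f x)).2
    have := hX (f' (g' (g (f x)))) (f' (f x)) x
    have := f'f x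
    simp only [Function.comp_apply]
    linarith

theorem isQIPair_mul_left {G : Type*} [Group G] (S : Set G) (a : G) :
    IsQIPair (wdistR S) (wdistR S) (a * ·) (a⁻¹ * ·) 1 0 := by
  simp [IsQIPair, wdistR_mul_left, wdistR_self]

theorem isQIPair_of_wdistR_le {G : Type*} [Group G] {S : Set G} (hS : Subgroup.closure S = ⊤)
    {φ : G → G} {M : ℝ} (hφ : ∀ x, wdistR S (φ x) x ≤ M) :
    IsQIPair (wdistR S) (wdistR S) φ φ 1 (2 * M) := by
  have tri := wdistR_triangle hS
  have bd : ∀ x x', wdistR S x x' - 2 * M ≤ wdistR S (φ x) (φ x') ∧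
      wdistR S (φ x) (φ x') ≤ wdistR S x x' + 2 * M := fun x x' => by
    have := tri (φ x) x (φ x')
    have := tri x x' (φ x')
    have := tri x (φ x) x'
    have := tri (φ x) (φ x') x'
    rw [wdistR_comm S x' (φ x')] at *
    rw [wdistR_comm S x (φ x)] at *
    constructor <;> linarith [hφ x, hφ x']
  simp only [IsQIPair, inv_one, one_mul]
  refine ⟨bd, bd, fun x => ?_, fun x => ?_⟩ <;>
  · linarith [tri (φ (φ x)) (φ x) x, hφ (φ x), hφ x]

end QuasiIsometry

section QuasiOptimal

variable {G : Type*} [Group G] {𝒮 : Set (Set G)}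

theorem uniformQI_of_wdistR_le (hgen : ∀ S ∈ 𝒮, Subgroup.closure S = ⊤) {φ : G → G} {M : ℝ}
    (hM : 0 ≤ M) (hφ : ∀ S ∈ 𝒮, ∀ x, wdistR S (φ x) x ≤ M) : UniformQI 𝒮 φ :=
  ⟨1, 2 * M, zero_le_one, by positivity, φ,
    fun S hS => isQIPair_of_wdistR_le (hgen S hS) (hφ S hS)⟩

theorem QuasiOptimal.apply_eq_apply_one_mul (hopt : QuasiOptimal 𝒮) {φ : G → G}
    (hφ : UniformQI 𝒮 φ) (x : G) : φ x = φ 1 * x := by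
  obtain ⟨c, hc, -⟩ := hopt φ hφ
  rw [hc x, hc 1, mul_one]

theorem QuasiOptimal.eq_of_wdistR_le (hgen : ∀ S ∈ 𝒮, Subgroup.closure S = ⊤)
    (hopt : QuasiOptimal 𝒮) {a b : G} {R : ℝ} (hab : ∀ S ∈ 𝒮, wdistR S a b ≤ R) : a = b := by
  classical
  set u := b⁻¹ * a
  have hφ : UniformQI 𝒮 (Function.update id 1 u) := by
    refine uniformQI_of_wdistR_le hgen (le_max_right R 0) fun S hS x => ?_
    by_cases hx : x = 1
    · subst hx
      rw [Function.update_self, ← wdistR_mul_left S b, mul_inv_cancel_left, mul_one]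
      exact (hab S hS).trans (le_max_left R 0)
    · simp [Function.update_of_ne hx, wdistR_self]
  have hu : u = 1 := by
    by_contra hu
    have h := hopt.apply_eq_apply_one_mul hφ u
    rw [Function.update_of_ne hu, Function.update_self, id] at h
    exact hu (by simpa using h)
  exact (inv_mul_eq_one.1 hu).symm

end QuasiOptimal

section SemiShared

variable {A B : Type*} [Group A] [Group B] {𝒮A : Set (Set A)} {𝒮B : Set (Set B)}
  {α : A → B} {β : B → A}

theorem SemiSharedQI.uniformQI_conj (hgen : ∀ S ∈ 𝒮B, Subgroup.closure S = ⊤)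
    (h : SemiSharedQI 𝒮B α β) (a : A) : UniformQI 𝒮B (fun y => α (a * β y)) := by
  obtain ⟨l, e, hl, he, hQI⟩ := h
  refine ⟨?lam, ?eps, ?_, ?_, fun y => α (a⁻¹ * β y), fun S hS => ?conj⟩
  case conj =>
    obtain ⟨SA, -, hSA, hαβ⟩ := hQI S hS
    have triA := wdistR_triangle hSA
    have triB := wdistR_triangle (hgen S hS)
    exact (hαβ.symm.comp triB triA hl he zero_le_one le_rfl (isQIPair_mul_left SA a)).comp
      triB triB (by positivity) (by positivity) hl he hαβ
  all_goals positivity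

def inducedMap (α : A → B) (β : B → A) (a : A) : B :=
  α (a * β 1)

theorem SemiSharedQI.conj_eq_inducedMap_mul (hgen : ∀ S ∈ 𝒮B, Subgroup.closure S = ⊤)
    (hopt : QuasiOptimal 𝒮B) (h : SemiSharedQI 𝒮B α β) (a : A) (y : B) :
    α (a * β y) = inducedMap α β a * y :=
  hopt.apply_eq_apply_one_mul (h.uniformQI_conj hgen a) y

theorem SemiSharedQI.inducedMap_mul (hgen : ∀ S ∈ 𝒮B, Subgroup.closure S = ⊤)
    (hopt : QuasiOptimal 𝒮B) (h : SemiSharedQI 𝒮B α β) (a₁ a₂ : A) :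
    inducedMap α β (a₁ * a₂) = inducedMap α β a₁ * inducedMap α β a₂ := by
  rw [← h.conj_eq_inducedMap_mul hgen hopt, inducedMap, inducedMap, mul_assoc]
  obtain ⟨l, e, hl, -, hQI⟩ := h
  refine hopt.eq_of_wdistR_le hgen (R := l * e + e) fun S hS => ?_
  obtain ⟨SA, -, -, hαβ⟩ := hQI S hS
  calc wdistR S (α (a₁ * (a₂ * β 1))) (α (a₁ * β (α (a₂ * β 1))))
      ≤ l * wdistR SA (a₁ * (a₂ * β 1)) (a₁ * β (α (a₂ * β 1))) + e := (hαβ.1 _ _).2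
    _ ≤ l * e + e := by
      rw [wdistR_mul_left, wdistR_comm]
      gcongr
      exact hαβ.2.2.2 _

theorem inducedMap_leftInverse (hgenA : ∀ S ∈ 𝒮A, Subgroup.closure S = ⊤)
    (hgenB : ∀ S ∈ 𝒮B, Subgroup.closure S = ⊤) (hoptA : QuasiOptimal 𝒮A)
    (hoptB : QuasiOptimal 𝒮B) (hαβ : SemiSharedQI 𝒮B α β) (hβα : SemiSharedQI 𝒮A β α) :
    Function.LeftInverse (inducedMap β α) (inducedMap α β) := by
  intro a
  rw [inducedMap, ← hαβ.conj_eq_inducedMap_mul hgenB hoptB]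
  obtain ⟨l, e, -, -, hQI⟩ := hβα
  refine hoptA.eq_of_wdistR_le hgenA (R := e + e) fun S hS => ?_
  obtain ⟨SB, -, -, hβαS⟩ := hQI S hS
  calc wdistR S (β (α (a * β (α 1)))) a
      ≤ wdistR S (β (α (a * β (α 1)))) (a * β (α 1)) + wdistR S (a * β (α 1)) (a * 1) := by
        simpa using wdistR_triangle (hgenA S hS) _ (a * β (α 1)) a
    _ ≤ e + e := by
      rw [wdistR_mul_left]
      exact add_le_add (hβαS.2.2.1 _) (hβαS.2.2.1 _)

end SemiShared

theorem semishared_qi_implies_isomorphic_general {G H : Type*} [Group G] [Group H]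
    (𝒮G : Set (Set G)) (𝒮H : Set (Set H))
    (h𝒮G : ∀ S ∈ 𝒮G, S.Finite ∧ S⁻¹ = S ∧ Subgroup.closure S = ⊤)
    (h𝒮H : ∀ S ∈ 𝒮H, S.Finite ∧ S⁻¹ = S ∧ Subgroup.closure S = ⊤)
    (hoptG : QuasiOptimal 𝒮G) (hoptH : QuasiOptimal 𝒮H)
    (η : G → H) (η' : H → G)
    (hη : SemiSharedQI 𝒮H η η') (hη' : SemiSharedQI 𝒮G η' η) :
    Nonempty (G ≃* H) := by
  have hgenG : ∀ S ∈ 𝒮G, Subgroup.closure S = ⊤ := fun S hS => (h𝒮G S hS).2.2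
  have hgenH : ∀ S ∈ 𝒮H, Subgroup.closure S = ⊤ := fun S hS => (h𝒮H S hS).2.2
  exact ⟨{ toFun := inducedMap η η'
           invFun := inducedMap η' η
           left_inv := inducedMap_leftInverse hgenG hgenH hoptG hoptH hη hη'
           right_inv := inducedMap_leftInverse hgenH hgenG hoptH hoptG hη' hη
           map_mul' := hη.inducedMap_mul hgenH hoptH }⟩

/-- If `G` and `H` (each satisfying `x^y = x⁻¹ ⟹ x = x⁻¹` and each
non-abelian or of exponent 2) carry quasi-optimal families of finite symmetric generating
systems and there is a pair `(η, η')` which is both an `𝒮_H`-semi-shared and (reversed)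
an `𝒮_G`-semi-shared quasi-isometry, then `G ≅ H`. -/
theorem semishared_qi_implies_isomorphic {G H : Type*} [Group G] [Group H]
    [Group.FG G] [Group.FG H]
    (hconjG : ∀ x y : G, y⁻¹ * x * y = x⁻¹ → x = x⁻¹)
    (hconjH : ∀ x y : H, y⁻¹ * x * y = x⁻¹ → x = x⁻¹)
    (hGna : (¬ ∀ a b : G, a * b = b * a) ∨ ∀ x : G, x * x = 1)
    (hHna : (¬ ∀ a b : H, a * b = b * a) ∨ ∀ x : H, x * x = 1)
    (𝒮G : Set (Set G)) (𝒮H : Set (Set H))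
    (h𝒮G : ∀ S ∈ 𝒮G, S.Finite ∧ S⁻¹ = S ∧ Subgroup.closure S = ⊤)
    (h𝒮H : ∀ S ∈ 𝒮H, S.Finite ∧ S⁻¹ = S ∧ Subgroup.closure S = ⊤)
    (hoptG : QuasiOptimal 𝒮G) (hoptH : QuasiOptimal 𝒮H)
    (η : G → H) (η' : H → G)
    (hη : SemiSharedQI 𝒮H η η') (hη' : SemiSharedQI 𝒮G η' η) :
    Nonempty (G ≃* H) :=
  semishared_qi_implies_isomorphic_general 𝒮G 𝒮H h𝒮G h𝒮H hoptG hoptH η η' hη hη'
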